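/- The Cayley transformation C(x) = (e_{n+1}x + 1)(x + e_{n+1})^{-1} maps R^n = span(e_1,...,e_n) bijectively onto S^n \ {e_{n+1}}, with inverse x_s ↦ (-e_{n+1} x_s + 1)(x_s - e_{n+1})^{-1}; in particular ‖C(x)‖ = 1 for all x ∈ R^n and C(C^{-1}(x_s)) = x_s for all x_s ∈ S^n \ {e_{n+1}}. -/

import Mathlib

open CliffordAlgebra

noncomputable def Qneg (n : ℕ) : QuadraticForm ℝ (EuclideanSpace ℝ (Fin (n+1))) :=
  - (LinearMap.BilinMap.toQuadraticMap (innerₗ (EuclideanSpace ℝ (Fin (n+1)))))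

noncomputable abbrev Cl (n : ℕ) := CliffordAlgebra (Qneg n)

/-- The embedding of `ℝ^n = span(e_1, …, e_n)` into `ℝ^{n+1}`. -/
noncomputable def emb (n : ℕ) (x : EuclideanSpace ℝ (Fin n)) :
    EuclideanSpace ℝ (Fin (n+1)) :=
  ∑ i : Fin n, x i • EuclideanSpace.single i.castSucc (1 : ℝ)

/-- The unit vector `e_{n+1}` orthogonal to `ℝ^n`. -/
noncomputable def en1 (n : ℕ) : EuclideanSpace ℝ (Fin (n+1)) :=
  EuclideanSpace.single (Fin.last n) 1

/-- The inverse `v⁻¹ = -v/‖v‖²` of a nonzero vector `v` in `Cl_{n+1}`. -/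
noncomputable def vecInv (n : ℕ) (v : EuclideanSpace ℝ (Fin (n+1))) : Cl n :=
  (-(‖v‖^2)⁻¹) • ι (Qneg n) v

/-- The Cayley transformation `C(x) = e_{n+1} + 2(x + e_{n+1})⁻¹` as a vector in `ℝ^{n+1}`. -/
noncomputable def cayley (n : ℕ) (x : EuclideanSpace ℝ (Fin n)) :
    EuclideanSpace ℝ (Fin (n+1)) :=
  en1 n - (2 * (‖emb n x + en1 n‖^2)⁻¹) • (emb n x + en1 n)

/-- The inverse Cayley transformation `C⁻¹(x_s) = -e_{n+1} + 2(x_s - e_{n+1})⁻¹` as a vector. -/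
noncomputable def cayleyInv (n : ℕ) (xs : EuclideanSpace ℝ (Fin (n+1))) :
    EuclideanSpace ℝ (Fin (n+1)) :=
  -en1 n - (2 * (‖xs - en1 n‖^2)⁻¹) • (xs - en1 n)

/-! Write `2u⁻¹ = -2u/‖u‖²` for a vector `u`, so that `C(x) = e + 2(x + e)⁻¹` and
`C⁻¹(x_s) = -e + 2(x_s - e)⁻¹` with `e = e_{n+1}`. The map `u ↦ 2u⁻¹` is an involution, which makes
`C⁻¹ ∘ C = id` and `C ∘ C⁻¹ = id` immediate. For a unit vector `e` and `u ≠ 0` one has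
`‖e + 2u⁻¹‖² = 1 + 4(1 - ⟪e, u⟫)/‖u‖²`, so `‖e + 2u⁻¹‖ = 1` iff `⟪e, u⟫ = 1`: this gives
`‖C(x)‖ = 1`, and, read backwards through the involution, that `C⁻¹(x_s) ⊥ e`, i.e. `C⁻¹(x_s) ∈ ℝⁿ`.
The Clifford product formulas follow from `e² = -1` and `u² = -‖u‖²`, which give
`(e(u - e) + 1)u = -‖u‖² e + 2u`. -/

open RealInnerProductSpace

theorem CliffordAlgebra.ι_mul_ι_sub_add_one_mul_ι {R M : Type*} [CommRing R] [AddCommGroup M]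
    [Module R M] {Q : QuadraticForm R M} {e : M} (he : Q e = -1) (u : M) :
    (ι Q e * ι Q (u - e) + 1) * ι Q u = ι Q (Q u • e + (2 : R) • u) := by
  have hA := ι_sq_scalar Q e
  have hB := ι_sq_scalar Q u
  calc (ι Q e * ι Q (u - e) + 1) * ι Q u
      = ι Q e * (ι Q u * ι Q u) - (ι Q e * ι Q e) * ι Q u + ι Q u := by
        rw [map_sub]; noncomm_ring
    _ = Q u • ι Q e + (2 : R) • ι Q u := by
        rw [hA, hB, he, ← Algebra.commutes, ← Algebra.smul_def, ← Algebra.smul_def, neg_one_smul,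
          sub_neg_eq_add, two_smul, add_assoc]
    _ = ι Q (Q u • e + (2 : R) • u) := by rw [map_add, map_smul, map_smul]

theorem CliffordAlgebra.ι_add_two_mul_inv_smul {K M : Type*} [Field K] [AddCommGroup M]
    [Module K M] {Q : QuadraticForm K M} {e u : M} (he : Q e = -1) (hu : Q u ≠ 0) :
    ι Q (e + (2 * (Q u)⁻¹) • u) = (ι Q e * ι Q (u - e) + 1) * ((Q u)⁻¹ • ι Q u) := by
  rw [mul_smul_comm, ι_mul_ι_sub_add_one_mul_ι he, ← map_smul, smul_add, smul_smul, smul_smul,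
    inv_mul_cancel₀ hu, one_smul, mul_comm]

section TwoInv

variable {F : Type*} [NormedAddCommGroup F] [InnerProductSpace ℝ F]

/-- `2u⁻¹` for the Clifford inverse `u⁻¹ = -u/‖u‖²` of a vector. -/
noncomputable def twoInv (u : F) : F := -((2 * (‖u‖ ^ 2)⁻¹) • u)

@[simp] theorem twoInv_zero : twoInv (0 : F) = 0 := by simp [twoInv]

theorem norm_twoInv_sq (u : F) : ‖twoInv u‖ ^ 2 = 4 * (‖u‖ ^ 2)⁻¹ := by
  rcases eq_or_ne u 0 with rfl | hu
  · simp
  have : ‖u‖ ≠ 0 := norm_ne_zero_iff.2 hu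
  rw [twoInv, norm_neg, norm_smul, mul_pow, Real.norm_eq_abs, sq_abs]
  field_simp
  ring

theorem twoInv_twoInv (u : F) : twoInv (twoInv u) = u := by
  rcases eq_or_ne u 0 with rfl | hu
  · simp
  have : ‖u‖ ≠ 0 := norm_ne_zero_iff.2 hu
  rw [twoInv, norm_twoInv_sq, twoInv]
  match_scalars
  field_simp
  ring

theorem twoInv_involutive : Function.Involutive (twoInv : F → F) := twoInv_twoInv

theorem twoInv_eq_zero {u : F} : twoInv u = 0 ↔ u = 0 :=
  twoInv_involutive.injective.eq_iff' twoInv_zero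

theorem norm_add_twoInv_eq_one_iff {e u : F} (he : ‖e‖ = 1) (hu : u ≠ 0) :
    ‖e + twoInv u‖ = 1 ↔ ⟪e, u⟫ = 1 := by
  have hu' : ‖u‖ ≠ 0 := norm_ne_zero_iff.2 hu
  have key : ‖e + twoInv u‖ ^ 2 = 1 + 4 * (‖u‖ ^ 2)⁻¹ * (1 - ⟪e, u⟫) := by
    rw [norm_add_sq_real, norm_twoInv_sq, he, twoInv, inner_neg_right, real_inner_smul_right]
    ring
  rw [← pow_eq_one_iff_of_nonneg (norm_nonneg _) two_ne_zero, key, add_eq_left, mul_eq_zero,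
    sub_eq_zero, or_iff_right (by positivity)]
  exact eq_comm

end TwoInv

theorem Qneg_apply (n : ℕ) (v : EuclideanSpace ℝ (Fin (n+1))) : Qneg n v = -‖v‖ ^ 2 := by
  rw [Qneg, neg_apply, LinearMap.BilinMap.toQuadraticMap_apply,
    innerₗ_apply_apply, real_inner_self_eq_norm_sq]

theorem ι_add_twoInv (n : ℕ) {e u : EuclideanSpace ℝ (Fin (n+1))} (he : ‖e‖ = 1) (hu : u ≠ 0) :
    ι (Qneg n) (e + twoInv u) = (ι (Qneg n) e * ι (Qneg n) (u - e) + 1) * vecInv n u := by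
  have hQe : Qneg n e = -1 := by rw [Qneg_apply, he, one_pow]
  have hQu : Qneg n u ≠ 0 := by rw [Qneg_apply]; simpa using hu
  rw [vecInv, ← inv_neg, ← Qneg_apply, ← ι_add_two_mul_inv_smul hQe hQu, twoInv, Qneg_apply,
    inv_neg, mul_neg, neg_smul, ← sub_eq_add_neg, sub_eq_add_neg]

theorem emb_apply_castSucc (n : ℕ) (x : EuclideanSpace ℝ (Fin n)) (i : Fin n) :
    emb n x i.castSucc = x i := by
  simp [emb, Pi.single_apply, Fin.castSucc_inj]

theorem emb_apply_last (n : ℕ) (x : EuclideanSpace ℝ (Fin n)) : emb n x (Fin.last n) = 0 := by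
  simp [emb, (Fin.castSucc_lt_last _).ne']

theorem emb_injective (n : ℕ) : Function.Injective (emb n) := fun a b h => by
  ext i
  rw [← emb_apply_castSucc n a, ← emb_apply_castSucc n b, h]

theorem exists_emb_eq_of_apply_last (n : ℕ) {v : EuclideanSpace ℝ (Fin (n+1))}
    (hv : v (Fin.last n) = 0) : ∃ y, emb n y = v :=
  ⟨WithLp.toLp 2 fun i => v i.castSucc, by
    ext j
    induction j using Fin.lastCases with
    | last => rw [emb_apply_last, hv]
    | cast i => rw [emb_apply_castSucc]⟩

theorem norm_en1 (n : ℕ) : ‖en1 n‖ = 1 := by simp [en1]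

theorem inner_en1_right (n : ℕ) (v : EuclideanSpace ℝ (Fin (n+1))) :
    ⟪v, en1 n⟫ = v (Fin.last n) := by
  simp [en1, EuclideanSpace.inner_single_right]

theorem inner_en1_emb_add_en1 (n : ℕ) (x : EuclideanSpace ℝ (Fin n)) :
    ⟪en1 n, emb n x + en1 n⟫ = 1 := by
  rw [inner_add_right, real_inner_comm, inner_en1_right, emb_apply_last,
    real_inner_self_eq_norm_sq, norm_en1, zero_add, one_pow]

theorem emb_add_en1_ne_zero (n : ℕ) (x : EuclideanSpace ℝ (Fin n)) : emb n x + en1 n ≠ 0 :=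
  fun h => by simpa [h] using inner_en1_emb_add_en1 n x

theorem cayley_eq (n : ℕ) (x : EuclideanSpace ℝ (Fin n)) :
    cayley n x = en1 n + twoInv (emb n x + en1 n) :=
  sub_eq_add_neg _ _

theorem cayleyInv_eq (n : ℕ) (xs : EuclideanSpace ℝ (Fin (n+1))) :
    cayleyInv n xs = -en1 n + twoInv (xs - en1 n) :=
  sub_eq_add_neg _ _

theorem norm_cayley (n : ℕ) (x : EuclideanSpace ℝ (Fin n)) : ‖cayley n x‖ = 1 := by
  rw [cayley_eq, norm_add_twoInv_eq_one_iff (norm_en1 n) (emb_add_en1_ne_zero n x)]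
  exact inner_en1_emb_add_en1 n x

theorem cayley_ne_en1 (n : ℕ) (x : EuclideanSpace ℝ (Fin n)) : cayley n x ≠ en1 n := by
  rw [cayley_eq, Ne, add_eq_left, twoInv_eq_zero]
  exact emb_add_en1_ne_zero n x

theorem cayleyInv_cayley (n : ℕ) (x : EuclideanSpace ℝ (Fin n)) :
    cayleyInv n (cayley n x) = emb n x := by
  rw [cayleyInv_eq, cayley_eq, add_sub_cancel_left, twoInv_twoInv]
  abel

theorem cayley_eq_of_emb_eq_cayleyInv (n : ℕ) {y : EuclideanSpace ℝ (Fin n)}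
    {xs : EuclideanSpace ℝ (Fin (n+1))} (hy : emb n y = cayleyInv n xs) : cayley n y = xs := by
  rw [cayley_eq, hy, cayleyInv_eq, neg_add_cancel_comm, twoInv_twoInv, add_sub_cancel]

theorem cayleyInv_apply_last (n : ℕ) {xs : EuclideanSpace ℝ (Fin (n+1))} (hxs : ‖xs‖ = 1)
    (hne : xs ≠ en1 n) : cayleyInv n xs (Fin.last n) = 0 := by
  have hw : twoInv (xs - en1 n) ≠ 0 := twoInv_eq_zero.not.2 (sub_ne_zero.2 hne)
  have h := (norm_add_twoInv_eq_one_iff (norm_en1 n) hw).1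
    (by rwa [twoInv_twoInv, add_sub_cancel])
  rw [← inner_en1_right, cayleyInv_eq, inner_add_left, inner_neg_left, real_inner_comm _ (twoInv _), h,
    real_inner_self_eq_norm_sq, norm_en1]
  norm_num

theorem ι_cayley (n : ℕ) (x : EuclideanSpace ℝ (Fin n)) :
    ι (Qneg n) (cayley n x) =
      (ι (Qneg n) (en1 n) * ι (Qneg n) (emb n x) + 1) * vecInv n (emb n x + en1 n) := by
  rw [cayley_eq, ι_add_twoInv n (norm_en1 n) (emb_add_en1_ne_zero n x), add_sub_cancel_right]

theorem ι_cayleyInv (n : ℕ) {xs : EuclideanSpace ℝ (Fin (n+1))} (hne : xs ≠ en1 n) :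
    ι (Qneg n) (cayleyInv n xs) =
      (-(ι (Qneg n) (en1 n) * ι (Qneg n) xs) + 1) * vecInv n (xs - en1 n) := by
  rw [cayleyInv_eq, ι_add_twoInv n (by rw [norm_neg, norm_en1]) (sub_ne_zero.2 hne),
    sub_neg_eq_add, sub_add_cancel, map_neg, neg_mul]

/-- The Cayley transformation `C(x) = (e_{n+1}x + 1)(x + e_{n+1})⁻¹` maps `ℝ^n` bijectively
onto `S^n \ {e_{n+1}}`, with inverse `x_s ↦ (-e_{n+1}x_s + 1)(x_s - e_{n+1})⁻¹`; in particular
`‖C(x)‖ = 1` for all `x ∈ ℝ^n` and `C(C⁻¹(x_s)) = x_s` for all `x_s ∈ S^n \ {e_{n+1}}`. -/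
theorem cayley_bijective (n : ℕ) :
    (∀ x : EuclideanSpace ℝ (Fin n),
      ι (Qneg n) (cayley n x) =
        (ι (Qneg n) (en1 n) * ι (Qneg n) (emb n x) + 1) * vecInv n (emb n x + en1 n) ∧
      ‖cayley n x‖ = 1 ∧ cayley n x ≠ en1 n) ∧
    Function.Injective (cayley n) ∧
    (∀ xs : EuclideanSpace ℝ (Fin (n+1)), ‖xs‖ = 1 → xs ≠ en1 n →
      ι (Qneg n) (cayleyInv n xs) =
        (-(ι (Qneg n) (en1 n) * ι (Qneg n) xs) + 1) * vecInv n (xs - en1 n) ∧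
      ∃ y : EuclideanSpace ℝ (Fin n), emb n y = cayleyInv n xs ∧ cayley n y = xs) := by
  refine ⟨fun x => ⟨ι_cayley n x, norm_cayley n x, cayley_ne_en1 n x⟩, ?_,
    fun xs hxs hne => ⟨ι_cayleyInv n hne, ?_⟩⟩
  · intro a b h
    apply emb_injective n
    rw [← cayleyInv_cayley n a, ← cayleyInv_cayley n b, h]
  · obtain ⟨y, hy⟩ := exists_emb_eq_of_apply_last n (cayleyInv_apply_last n hxs hne)
    exact ⟨y, hy, cayley_eq_of_emb_eq_cayleyInv n hy⟩
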